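/- Let f : ℝ^d → ℝ be μ-strongly convex (μ > 0), differentiable, and φ-smooth, with minimizer x*. Let γ > 0 and M = 2/γ + φ(‖x₀-x*‖, (1/γ)‖x₀-x*‖). Then the proximal point iterates x_{k+1} = prox_{γf}(x_k) satisfy ‖x_k - x*‖² ≤ (1 - μ/M)^k · ‖x₀ - x*‖² for all k ≥ 0. -/

import Mathlib

open RealInnerProductSpace


lemma grad_zero_of_min {d : ℕ} {f : EuclideanSpace ℝ (Fin d) → ℝ} {g x : EuclideanSpace ℝ (Fin d)}
    (hf : HasGradientAt f g x) (hmin : ∀ z, f x ≤ f z) : g = 0 := by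
  have h : IsLocalMin f x := Filter.Eventually.of_forall hmin
  have h2 := h.hasFDerivAt_eq_zero (hasGradientAt_iff_hasFDerivAt.mp hf)
  have h3 := congrArg (fun L => (InnerProductSpace.toDual ℝ (EuclideanSpace ℝ (Fin d))).symm L) h2
  simpa using h3

lemma prox_grad {d : ℕ} {f : EuclideanSpace ℝ (Fin d) → ℝ} {g c w : EuclideanSpace ℝ (Fin d)}
    {γ : ℝ} (hγ : 0 < γ) (hf : HasGradientAt f g w)
    (hmin : ∀ z, f w + ‖w - c‖ ^ 2 / (2 * γ) ≤ f z + ‖z - c‖ ^ 2 / (2 * γ)) :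
    g = (1 / γ) • (c - w) := by
  set q : EuclideanSpace ℝ (Fin d) → ℝ := fun z => f z + ‖z - c‖ ^ 2 / (2 * γ) with hq
  have hlm : IsLocalMin q w := Filter.Eventually.of_forall hmin
  have hid : HasFDerivAt (fun z : EuclideanSpace ℝ (Fin d) => z - c)
      (ContinuousLinearMap.id ℝ (EuclideanSpace ℝ (Fin d))) w := (hasFDerivAt_id w).sub_const c
  have h2 := (hid.inner ℝ hid).const_mul ((2 * γ)⁻¹)
  have h1 : HasFDerivAt f (InnerProductSpace.toDual ℝ _ g) w := hasGradientAt_iff_hasFDerivAt.mp hf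
  have h3 : HasFDerivAt q (InnerProductSpace.toDual ℝ _ g +
      (2 * γ)⁻¹ • ((fderivInnerCLM ℝ (w - c, w - c)).comp
        ((ContinuousLinearMap.id ℝ (EuclideanSpace ℝ (Fin d))).prod
          (ContinuousLinearMap.id ℝ (EuclideanSpace ℝ (Fin d)))))) w := by
    have := h1.add h2
    have hfun : q = f + fun y => (2 * γ)⁻¹ * ⟪y - c, y - c⟫ := by
      funext z
      rw [hq]
      simp only [Pi.add_apply, real_inner_self_eq_norm_sq]
      ring
    rw [hfun]
    exact this
  have h0 := hlm.hasFDerivAt_eq_zero h3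
  have hz : g + (1/γ) • (w - c) = 0 := by
    set v := g + (1/γ) • (w - c) with hvdef
    have hv := congrArg (fun L => L v) h0
    simp only [ContinuousLinearMap.add_apply, ContinuousLinearMap.smul_apply,
      ContinuousLinearMap.comp_apply, ContinuousLinearMap.prod_apply,
      ContinuousLinearMap.id_apply, fderivInnerCLM_apply,
      InnerProductSpace.toDual_apply_apply, ContinuousLinearMap.zero_apply, smul_eq_mul] at hv
    apply @inner_self_eq_zero ℝ _ _ _ _ v |>.mp
    nth_rewrite 1 [hvdef]
    rw [inner_add_left, real_inner_smul_left]
    have hc : (inner ℝ v (w - c) : ℝ) = inner ℝ (w - c) v := real_inner_comm _ _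
    rw [hc] at hv
    linear_combination hv
  have : g = -((1/γ) • (w - c)) := eq_neg_of_add_eq_zero_left hz
  rw [this, ← smul_neg, neg_sub]

set_option maxHeartbeats 1000000 in
lemma step_bound {d : ℕ} {f : EuclideanSpace ℝ (Fin d) → ℝ}
    {f' : EuclideanSpace ℝ (Fin d) → EuclideanSpace ℝ (Fin d)}
    (hf : ∀ x, HasGradientAt f (f' x) x)
    {μ : ℝ} (hμ : 0 < μ)
    (hsc : ∀ x y, f y + ⟪f' y, x - y⟫ + μ / 2 * ‖x - y‖ ^ 2 ≤ f x)
    (φ : ℝ → ℝ → ℝ)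
    (hφ_mono : ∀ a a' b b', 0 ≤ a → 0 ≤ b → a ≤ a' → b ≤ b' → φ a b ≤ φ a' b')
    (hsmooth : ∀ x y, ‖f' x - f' y‖ ≤ φ ‖x - y‖ ‖f' y‖ * ‖x - y‖)
    {p : EuclideanSpace ℝ (Fin d)} (hstar : ∀ z, f p ≤ f z) (hp0 : f' p = 0)
    {γ : ℝ} (hγ : 0 < γ)
    (x w : EuclideanSpace ℝ (Fin d))
    (hprox : ∀ z, f w + ‖w - x‖ ^ 2 / (2 * γ) ≤ f z + ‖z - x‖ ^ 2 / (2 * γ))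
    {R : ℝ} (hR : ‖x - p‖ ≤ R) :
    ‖w - p‖ ≤ ‖x - p‖ ∧
      (μ ≤ φ R ((1/γ) * R) →
        (2 + 2*γ*(φ R ((1/γ)*R))) * ‖w - p‖ ^ 2 ≤
          (2 + 2*γ*(φ R ((1/γ)*R)) - 2*γ*μ) * ‖x - p‖ ^ 2) := by
  have hg : f' w = (1/γ) • (x - w) := prox_grad hγ (hf w) hprox
  have hD : 0 ≤ f w - f p := by linarith [hstar w]
  -- strong convexity at w against p
  have hb : f w - f p + μ/2 * ‖w - p‖ ^ 2 ≤ ⟪f' w, w - p⟫ := by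
    have h := hsc p w
    rw [show p - w = -(w - p) by abel, inner_neg_right, norm_neg] at h
    linarith
  have hinner : ⟪f' w, w - p⟫ = (1/γ) * ⟪x - w, w - p⟫ := by
    rw [hg, real_inner_smul_left]
  -- expansion identity
  have hexp : ‖x - p‖ ^ 2 = ‖w - p‖ ^ 2 - 2 * ⟪w - p, w - x⟫ + ‖w - x‖ ^ 2 := by
    have h := norm_sub_sq_real (w - p) (w - x)
    rw [show (w - p) - (w - x) = x - p by abel] at h
    exact h
  have hswap : ⟪w - p, w - x⟫ = - ⟪x - w, w - p⟫ := by
    rw [real_inner_comm, show w - x = -(x - w) by abel, inner_neg_left]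
  have key1 : ‖w - p‖ ^ 2 ≤ ‖x - p‖ ^ 2 - ‖w - x‖ ^ 2
      - 2*γ*(f w - f p + μ/2 * ‖w - p‖ ^ 2) := by
    have h2 := mul_le_mul_of_nonneg_left hb (by linarith : (0:ℝ) ≤ 2*γ)
    rw [hinner] at h2
    have hγ' : γ ≠ 0 := ne_of_gt hγ
    have hIfs : 2*γ*((1/γ) * ⟪x - w, w - p⟫) = 2 * ⟪x - w, w - p⟫ := by
      set I : ℝ := ⟪x - w, w - p⟫ with hI
      field_simp
    rw [hIfs] at h2
    rw [hexp, hswap]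
    linarith
  have hS'0 : (0:ℝ) ≤ ‖w - p‖ ^ 2 := sq_nonneg _
  have part1 : ‖w - p‖ ≤ ‖x - p‖ := by
    nlinarith [key1, sq_nonneg ‖w - x‖, norm_nonneg (w - p), norm_nonneg (x - p),
      mul_nonneg hγ.le hD,
      mul_nonneg hγ.le (mul_nonneg hμ.le hS'0)]
  refine ⟨part1, fun hμφ => ?_⟩
  set φ₀ := φ R ((1/γ) * R) with hφ₀
  have hA_le : ‖w - x‖ ^ 2 ≤ ‖x - p‖ ^ 2 - ‖w - p‖ ^ 2 := by
    nlinarith [key1, mul_nonneg hγ.le hD,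
      mul_nonneg hγ.le (mul_nonneg hμ.le hS'0)]
  have hR0 : 0 ≤ R := le_trans (norm_nonneg _) hR
  have hAx : ‖w - x‖ ≤ R := by
    nlinarith [hA_le, hS'0, norm_nonneg (w - x), hR, norm_nonneg (x - p)]
  have hxw : ‖x - w‖ = ‖w - x‖ := norm_sub_rev _ _
  have hfw_norm : ‖f' w‖ = (1/γ) * ‖x - w‖ := by
    rw [hg, norm_smul, Real.norm_eq_abs, abs_of_pos (by positivity : (0:ℝ) < 1/γ)]
  have hfw_le : ‖f' w‖ ≤ (1/γ) * R := by
    rw [hfw_norm, hxw]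
    exact mul_le_mul_of_nonneg_left hAx (by positivity)
  have hφ_le : φ ‖x - w‖ ‖f' w‖ ≤ φ₀ := by
    apply hφ_mono _ _ _ _ (norm_nonneg _) (norm_nonneg _) (by rw [hxw]; exact hAx) hfw_le
  have hsm : ‖f' x - f' w‖ ≤ φ₀ * ‖x - w‖ :=
    le_trans (hsmooth x w) (mul_le_mul_of_nonneg_right hφ_le (norm_nonneg _))
  -- bound f x - f w
  have hh : f x - f w ≤ (1/γ) * ‖w - x‖ ^ 2 + φ₀ * ‖w - x‖ ^ 2 - μ/2 * ‖w - x‖ ^ 2 := by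
    have h := hsc w x
    rw [show w - x = -(x - w) by abel, inner_neg_right, norm_neg] at h
    have e1 : ⟪f' x, x - w⟫ = ⟪f' w, x - w⟫ + ⟪f' x - f' w, x - w⟫ := by
      rw [inner_sub_left]; ring
    have e2 : ⟪f' w, x - w⟫ = (1/γ) * ‖x - w‖ ^ 2 := by
      rw [hg, real_inner_smul_left, real_inner_self_eq_norm_sq]
    have e3 : ⟪f' x - f' w, x - w⟫ ≤ φ₀ * ‖x - w‖ ^ 2 := by
      calc ⟪f' x - f' w, x - w⟫ ≤ ‖f' x - f' w‖ * ‖x - w‖ := real_inner_le_norm _ _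
        _ ≤ (φ₀ * ‖x - w‖) * ‖x - w‖ := mul_le_mul_of_nonneg_right hsm (norm_nonneg _)
        _ = φ₀ * ‖x - w‖ ^ 2 := by ring
    rw [← hxw]
    linarith [h, e1, e2, e3]
  -- strong convexity at p against x : μ/2 S ≤ f x - f p
  have hi : μ/2 * ‖x - p‖ ^ 2 ≤ f x - f p := by
    have h := hsc x p
    rw [hp0, inner_zero_left] at h
    linarith
  -- combine
  have hcomb : μ/2 * ‖x - p‖ ^ 2 ≤ (1/γ + φ₀ - μ/2) * ‖w - x‖ ^ 2 + (f w - f p) := by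
    linarith [hi, hh]
  have hcomb2 := mul_le_mul_of_nonneg_left hcomb (by linarith : (0:ℝ) ≤ 2*γ)
  have hγ' : γ ≠ 0 := ne_of_gt hγ
  have hcomb3 : γ*μ * ‖x - p‖ ^ 2 ≤ (2 + 2*γ*φ₀ - γ*μ) * ‖w - x‖ ^ 2 + 2*γ*(f w - f p) := by
    have : 2*γ*((1/γ + φ₀ - μ/2) * ‖w - x‖ ^ 2 + (f w - f p))
        = (2 + 2*γ*φ₀ - γ*μ) * ‖w - x‖ ^ 2 + 2*γ*(f w - f p) := by field_simp
    rw [this] at hcomb2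
    linarith [hcomb2]
  have hcoef : 0 ≤ 1 + 2*γ*φ₀ - γ*μ := by
    have h1 := mul_le_mul_of_nonneg_left hμφ hγ.le
    have h2 := mul_pos hγ hμ
    linarith
  have hprod := mul_nonneg hcoef (by linarith [hA_le] :
    (0:ℝ) ≤ ‖x - p‖ ^ 2 - ‖w - p‖ ^ 2 - ‖w - x‖ ^ 2)
  linarith [key1, hcomb3, hprod]

set_option maxHeartbeats 1600000 in
/-- Linear convergence of the deterministic proximal point method under
    strong convexity and φ-smoothness. -/
theorem stmt9 {d : ℕ} (f : EuclideanSpace ℝ (Fin d) → ℝ)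
    (f' : EuclideanSpace ℝ (Fin d) → EuclideanSpace ℝ (Fin d))
    (hf : ∀ x, HasGradientAt f (f' x) x)
    (μ : ℝ) (hμ : 0 < μ)
    (hsc : ∀ x y, f y + ⟪f' y, x - y⟫ + μ / 2 * ‖x - y‖ ^ 2 ≤ f x)
    (φ : ℝ → ℝ → ℝ)
    (hφ_nonneg : ∀ a b, 0 ≤ a → 0 ≤ b → 0 ≤ φ a b)
    (hφ_mono : ∀ a a' b b', 0 ≤ a → 0 ≤ b → a ≤ a' → b ≤ b' → φ a b ≤ φ a' b')
    (hsmooth : ∀ x y, ‖f' x - f' y‖ ≤ φ ‖x - y‖ ‖f' y‖ * ‖x - y‖)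
    (xstar : EuclideanSpace ℝ (Fin d)) (hstar : ∀ z, f xstar ≤ f z)
    (γ : ℝ) (hγ : 0 < γ)
    (xs : ℕ → EuclideanSpace ℝ (Fin d))
    (hxs : ∀ k z, f (xs (k + 1)) + ‖xs (k + 1) - xs k‖ ^ 2 / (2 * γ) ≤
      f z + ‖z - xs k‖ ^ 2 / (2 * γ))
    (M : ℝ) (hM : M = 2 / γ + φ ‖xs 0 - xstar‖ ((1 / γ) * ‖xs 0 - xstar‖)) :
    ∀ k, ‖xs k - xstar‖ ^ 2 ≤ (1 - μ / M) ^ k * ‖xs 0 - xstar‖ ^ 2 := by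
  have hp0 : f' xstar = 0 := grad_zero_of_min (hf xstar) hstar
  have hstep : ∀ n, ‖xs n - xstar‖ ≤ ‖xs 0 - xstar‖ → _ := fun n h =>
    step_bound hf hμ hsc φ hφ_mono hsmooth hstar hp0 hγ
      (xs n) (xs (n + 1)) (hxs n) (R := ‖xs 0 - xstar‖) h
  by_cases h0 : ‖xs 0 - xstar‖ = 0
  · have hall : ∀ n, ‖xs n - xstar‖ ≤ ‖xs 0 - xstar‖ := by
      intro n
      induction n with
      | zero => exact le_refl _
      | succ n ih => exact le_trans (hstep n ih).1 ih
    intro k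
    have hk : ‖xs k - xstar‖ = 0 := le_antisymm (h0 ▸ hall k) (norm_nonneg _)
    rw [hk, h0]
    simp
  · have hR0 : 0 ≤ ‖xs 0 - xstar‖ := norm_nonneg _
    have hRpos : 0 < ‖xs 0 - xstar‖ := lt_of_le_of_ne hR0 (Ne.symm h0)
    have hbR : 0 ≤ (1/γ) * ‖xs 0 - xstar‖ := by positivity
    -- μ ≤ φ₀
    have h1 := hsc xstar (xs 0)
    have h2 := hsc (xs 0) xstar
    rw [hp0, inner_zero_left] at h2
    rw [show xstar - xs 0 = -(xs 0 - xstar) by abel, inner_neg_right, norm_neg] at h1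
    have h3 : μ * ‖xs 0 - xstar‖ ^ 2 ≤ ⟪f' (xs 0), xs 0 - xstar⟫ := by linarith
    have h5 : ⟪f' (xs 0), xs 0 - xstar⟫ ≤ ‖f' (xs 0)‖ * ‖xs 0 - xstar‖ := by
      have := real_inner_le_norm (f' (xs 0)) (xs 0 - xstar)
      linarith
    have h6 := hsmooth (xs 0) xstar
    rw [hp0, norm_zero, sub_zero] at h6
    have h7 : φ ‖xs 0 - xstar‖ 0 ≤ φ ‖xs 0 - xstar‖ ((1/γ) * ‖xs 0 - xstar‖) :=
      hφ_mono _ _ _ _ hR0 (le_refl 0) (le_refl _) hbR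
    have hμφ : μ ≤ φ ‖xs 0 - xstar‖ ((1/γ) * ‖xs 0 - xstar‖) := by
      have h8 := mul_le_mul_of_nonneg_right h6 hR0
      have h9 := mul_le_mul_of_nonneg_right h7 (sq_nonneg ‖xs 0 - xstar‖)
      have hR2 : 0 < ‖xs 0 - xstar‖ ^ 2 := by positivity
      have h10 : μ * ‖xs 0 - xstar‖ ^ 2
          ≤ φ ‖xs 0 - xstar‖ ((1/γ) * ‖xs 0 - xstar‖) * ‖xs 0 - xstar‖ ^ 2 := by
        nlinarith [h3, h5, h8, h9]
      exact le_of_mul_le_mul_right h10 hR2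
    have hφ₀0 : 0 ≤ φ ‖xs 0 - xstar‖ ((1/γ) * ‖xs 0 - xstar‖) := le_trans hμ.le hμφ
    have hMpos : 0 < M := by
      rw [hM]
      have : 0 < 2 / γ := by positivity
      linarith
    have hr0 : 0 ≤ 1 - μ / M := by
      have hμM : μ ≤ M := by
        rw [hM]
        have : 0 < 2 / γ := by positivity
        linarith
      rw [sub_nonneg, div_le_one hMpos]
      exact hμM
    have main : ∀ n, ‖xs n - xstar‖ ≤ ‖xs 0 - xstar‖ ∧
        ‖xs n - xstar‖ ^ 2 ≤ (1 - μ / M) ^ n * ‖xs 0 - xstar‖ ^ 2 := by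
      intro n
      induction n with
      | zero => exact ⟨le_refl _, by simp⟩
      | succ n ih =>
        obtain ⟨ih1, ih2⟩ := ih
        obtain ⟨s1, s2⟩ := hstep n ih1
        have s2' := s2 hμφ
        set φ₀ := φ ‖xs 0 - xstar‖ ((1/γ) * ‖xs 0 - xstar‖) with hφ₀def
        have hS0 : (0:ℝ) ≤ ‖xs n - xstar‖ ^ 2 := sq_nonneg _
        have hS'0 : (0:ℝ) ≤ ‖xs (n+1) - xstar‖ ^ 2 := sq_nonneg _
        have hγφ : 0 ≤ γ * φ₀ := mul_nonneg hγ.le hφ₀0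
        have hγμ : 0 < γ * μ := mul_pos hγ hμ
        have hPpos : (0:ℝ) < 2 + γ * φ₀ := by linarith
        have hstep' : ‖xs (n+1) - xstar‖ ^ 2 ≤ (1 - μ / M) * ‖xs n - xstar‖ ^ 2 := by
          have hfrac : 1 - μ / M = (2 + γ * φ₀ - γ * μ) / (2 + γ * φ₀) := by
            rw [hM]
            field_simp
          rw [hfrac, div_mul_eq_mul_div, le_div_iff₀ hPpos]
          have hY : 0 ≤ (2 + 2*γ*φ₀ - 2*γ*μ) * ‖xs n - xstar‖ ^ 2
              - (2 + 2*γ*φ₀) * ‖xs (n+1) - xstar‖ ^ 2 := by linarith [s2']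
          have hub : 0 ≤ γ * μ * ‖xs n - xstar‖ ^ 2 := mul_nonneg hγμ.le hS0
          have hX2 : 0 ≤ (2 + 2*γ*φ₀) * ((2 + γ*φ₀ - γ*μ) * ‖xs n - xstar‖ ^ 2
              - (2 + γ*φ₀) * ‖xs (n+1) - xstar‖ ^ 2) := by
            nlinarith [mul_nonneg hPpos.le hY, hub]
          nlinarith [hX2, hPpos, hγφ]
        refine ⟨le_trans s1 ih1, ?_⟩
        calc ‖xs (n+1) - xstar‖ ^ 2 ≤ (1 - μ / M) * ‖xs n - xstar‖ ^ 2 := hstep'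
          _ ≤ (1 - μ / M) * ((1 - μ / M) ^ n * ‖xs 0 - xstar‖ ^ 2) :=
            mul_le_mul_of_nonneg_left ih2 hr0
          _ = (1 - μ / M) ^ (n + 1) * ‖xs 0 - xstar‖ ^ 2 := by ring
    exact fun k => (main k).2
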